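/- Suppose the structure spaces X and Y are subsets of a common metric space (Z,d_Z), and equip Z×Ω with the metric \tilde d((x,a),(y,b)) = (1−α)d(a,b) + α d_Z(x,y). Then for p ≥ 1, q = 1, FGW_{α,p,1}(μ,ν)^p ≤ 2^p · W_p(μ,ν)^p, where W_p is the p-Wasserstein distance on Z×Ω with cost \tilde d. -/

import Mathlib

/-!
By the triangle inequality for `d_Z`, `|d_Z(x,x') - d_Z(y,y')| ≤ d_Z(x,y) + d_Z(x',y')`, so the
fused Gromov-Wasserstein integrand of a pair `(w, w')` is at most `c w + c w'`, where `c` is the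
Wasserstein cost `(1-α) d(a,b) + α d_Z(x,y)`. Convexity gives
`(c w + c w')^p ≤ 2^(p-1) (c w ^ p + c w' ^ p)`, and integrating over `π ⊗ π` for any coupling `π`
bounds its FGW energy by `2^p ∫ c^p dπ`.
-/

open MeasureTheory ENNReal Set

noncomputable section

/-- The set of couplings of two probability measures on `X × Ω` and `Y × Ω`. -/
def Couplings {X Y Ω : Type*} [MeasurableSpace X] [MeasurableSpace Y] [MeasurableSpace Ω]
    (μ : Measure (X × Ω)) (ν : Measure (Y × Ω)) : Set (Measure ((X × Ω) × (Y × Ω))) :=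
  {π | π.map Prod.fst = μ ∧ π.map Prod.snd = ν}

/-- The fused Gromov-Wasserstein cost of a coupling `π`, with trade-off `α` and
exponents `p, q`. Here `w.1.1, w.2.1` are the structure points `x, y` and
`w.1.2, w.2.2` the feature points `a, b`. -/
def fgwE {X Y Ω : Type*} [MetricSpace X] [MetricSpace Y] [MetricSpace Ω]
    [MeasurableSpace X] [MeasurableSpace Y] [MeasurableSpace Ω]
    (α p q : ℝ) (π : Measure ((X × Ω) × (Y × Ω))) : ℝ≥0∞ :=
  ∫⁻ w, (∫⁻ w', ENNReal.ofReal
      (((1 - α) * dist w.1.2 w.2.2 ^ q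
        + α * |dist w.1.1 w'.1.1 - dist w.2.1 w'.2.1| ^ q) ^ p) ∂π) ∂π

/-- The fused Gromov-Wasserstein distance. -/
def FGW {X Y Ω : Type*} [MetricSpace X] [MetricSpace Y] [MetricSpace Ω]
    [MeasurableSpace X] [MeasurableSpace Y] [MeasurableSpace Ω]
    (α p q : ℝ) (μ : Measure (X × Ω)) (ν : Measure (Y × Ω)) : ℝ≥0∞ :=
  (⨅ π ∈ Couplings μ ν, fgwE α p q π) ^ (1 / p)

/-- The metric `d̃` on `Z × Ω` of the paper, evaluated at a pair `w = ((x,a),(y,b))`. -/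
def fusedCost {Z Ω : Type*} [MetricSpace Z] [MetricSpace Ω] (α : ℝ)
    (w : (Z × Ω) × (Z × Ω)) : ℝ :=
  (1 - α) * dist w.1.2 w.2.2 + α * dist w.1.1 w.2.1

section Pointwise

variable {Z Ω : Type*} [MetricSpace Z] [MetricSpace Ω] {α : ℝ}

lemma fusedCost_nonneg (hα : α ∈ Icc (0 : ℝ) 1) (w : (Z × Ω) × (Z × Ω)) :
    0 ≤ fusedCost α w :=
  add_nonneg (mul_nonneg (sub_nonneg.2 hα.2) dist_nonneg) (mul_nonneg hα.1 dist_nonneg)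

lemma fgw_integrand_le_fusedCost_add (hα : α ∈ Icc (0 : ℝ) 1) (w w' : (Z × Ω) × (Z × Ω)) :
    (1 - α) * dist w.1.2 w.2.2 + α * |dist w.1.1 w'.1.1 - dist w.2.1 w'.2.1|
      ≤ fusedCost α w + fusedCost α w' := by
  have hdist : |dist w.1.1 w'.1.1 - dist w.2.1 w'.2.1| ≤ dist w.1.1 w.2.1 + dist w'.1.1 w'.2.1 := by
    simpa only [Real.dist_eq] using dist_dist_dist_le w.1.1 w'.1.1 w.2.1 w'.2.1
  have hfeat : 0 ≤ (1 - α) * dist w'.1.2 w'.2.2 := mul_nonneg (sub_nonneg.2 hα.2) dist_nonneg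
  unfold fusedCost
  nlinarith [mul_le_mul_of_nonneg_left hdist hα.1]

end Pointwise

lemma ENNReal.ofReal_rpow_le_of_le_add {s a b p : ℝ} (hs : 0 ≤ s) (ha : 0 ≤ a) (hb : 0 ≤ b)
    (hp : 1 ≤ p) (h : s ≤ a + b) :
    ENNReal.ofReal (s ^ p)
      ≤ 2 ^ (p - 1) * ENNReal.ofReal (a ^ p) + 2 ^ (p - 1) * ENNReal.ofReal (b ^ p) := by
  have hp0 : 0 ≤ p := zero_le_one.trans hp
  rw [← ENNReal.ofReal_rpow_of_nonneg hs hp0, ← ENNReal.ofReal_rpow_of_nonneg ha hp0,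
    ← ENNReal.ofReal_rpow_of_nonneg hb hp0, ← mul_add]
  calc ENNReal.ofReal s ^ p ≤ (ENNReal.ofReal a + ENNReal.ofReal b) ^ p := by
        gcongr
        rw [← ENNReal.ofReal_add ha hb]
        exact ENNReal.ofReal_le_ofReal h
    _ ≤ _ := ENNReal.rpow_add_le_mul_rpow_add_rpow _ _ hp

lemma ENNReal.two_mul_two_rpow_sub_one (p : ℝ) : 2 * (2 : ℝ≥0∞) ^ (p - 1) = 2 ^ p := by
  simpa only [ENNReal.rpow_one, add_sub_cancel] using
    (ENNReal.rpow_add 1 (p - 1) two_ne_zero ofNat_ne_top).symm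

lemma MeasureTheory.lintegral_lintegral_le_two_mul_of_le_add {β : Type*} [MeasurableSpace β]
    (π : Measure β) [IsProbabilityMeasure π] (F : β → β → ℝ≥0∞) (f : β → ℝ≥0∞)
    (h : ∀ w w', F w w' ≤ f w + f w') :
    ∫⁻ w, ∫⁻ w', F w w' ∂π ∂π ≤ 2 * ∫⁻ w, f w ∂π :=
  calc ∫⁻ w, ∫⁻ w', F w w' ∂π ∂π ≤ ∫⁻ w, (f w + ∫⁻ w', f w' ∂π) ∂π := by
        gcongr with w
        calc ∫⁻ w', F w w' ∂π ≤ ∫⁻ w', (f w + f w') ∂π := lintegral_mono (h w)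
          _ = f w + ∫⁻ w', f w' ∂π := by simp [lintegral_add_left measurable_const]
    _ = 2 * ∫⁻ w, f w ∂π := by simp [lintegral_add_right _ measurable_const, two_mul]

lemma isProbabilityMeasure_of_mem_couplings {X Y Ω : Type*} [MeasurableSpace X]
    [MeasurableSpace Y] [MeasurableSpace Ω] {μ : Measure (X × Ω)} {ν : Measure (Y × Ω)}
    [IsProbabilityMeasure μ] {π : Measure ((X × Ω) × (Y × Ω))} (hπ : π ∈ Couplings μ ν) :
    IsProbabilityMeasure π := by
  have : IsProbabilityMeasure (π.map Prod.fst) := hπ.1 ▸ inferInstance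
  exact Measure.isProbabilityMeasure_of_map Prod.fst

lemma fgwE_le_two_rpow_mul {Z Ω : Type*} [MetricSpace Z] [MetricSpace Ω] [MeasurableSpace Z]
    [MeasurableSpace Ω] {α p : ℝ} (hα : α ∈ Icc (0 : ℝ) 1) (hp : 1 ≤ p)
    (π : Measure ((Z × Ω) × (Z × Ω))) [IsProbabilityMeasure π] :
    fgwE α p 1 π ≤ 2 ^ p * ∫⁻ w, ENNReal.ofReal (fusedCost α w ^ p) ∂π := by
  have hpow : ∀ w w' : (Z × Ω) × (Z × Ω),
      ENNReal.ofReal (((1 - α) * dist w.1.2 w.2.2 ^ (1 : ℝ)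
          + α * |dist w.1.1 w'.1.1 - dist w.2.1 w'.2.1| ^ (1 : ℝ)) ^ p)
        ≤ 2 ^ (p - 1) * ENNReal.ofReal (fusedCost α w ^ p)
          + 2 ^ (p - 1) * ENNReal.ofReal (fusedCost α w' ^ p) := fun w w' => by
    simp only [Real.rpow_one]
    refine ENNReal.ofReal_rpow_le_of_le_add ?_ (fusedCost_nonneg hα w)
      (fusedCost_nonneg hα w') hp (fgw_integrand_le_fusedCost_add hα w w')
    exact add_nonneg (mul_nonneg (sub_nonneg.2 hα.2) dist_nonneg)
      (mul_nonneg hα.1 (abs_nonneg _))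
  calc fgwE α p 1 π
      ≤ 2 * ∫⁻ w, 2 ^ (p - 1) * ENNReal.ofReal (fusedCost α w ^ p) ∂π :=
        lintegral_lintegral_le_two_mul_of_le_add π _ _ hpow
    _ = 2 ^ p * ∫⁻ w, ENNReal.ofReal (fusedCost α w ^ p) ∂π := by
        rw [lintegral_const_mul' _ _ (rpow_ne_top_of_nonneg (by linarith) ofNat_ne_top),
          ← mul_assoc, ENNReal.two_mul_two_rpow_sub_one]

theorem stmt6_general {Z Ω : Type*} [MetricSpace Z] [MetricSpace Ω]
    [MeasurableSpace Z] [MeasurableSpace Ω]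
    (μ ν : Measure (Z × Ω)) [IsProbabilityMeasure μ]
    (α p : ℝ) (hα : α ∈ Set.Icc (0 : ℝ) 1) (hp : 1 ≤ p) :
    (FGW α p 1 μ ν) ^ p ≤ (2 : ℝ≥0∞) ^ p *
      ⨅ π ∈ Couplings μ ν,
        ∫⁻ w, ENNReal.ofReal
          (((1 - α) * dist w.1.2 w.2.2 + α * dist w.1.1 w.2.1) ^ p) ∂π := by
  have hp0 : p ≠ 0 := (zero_lt_one.trans_le hp).ne'
  have h2p : (2 : ℝ≥0∞) ^ p ≠ 0 := (rpow_pos two_pos ofNat_ne_top).ne'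
  have h2p' : (2 : ℝ≥0∞) ^ p ≠ ⊤ := rpow_ne_top_of_nonneg (by linarith) ofNat_ne_top
  rw [FGW, ← ENNReal.rpow_mul, one_div_mul_cancel hp0, ENNReal.rpow_one,
    ENNReal.mul_iInf_of_ne h2p h2p']
  refine iInf_mono fun π => ?_
  rw [ENNReal.mul_iInf_of_ne h2p h2p']
  refine iInf_mono fun hπ => ?_
  have := isProbabilityMeasure_of_mem_couplings hπ
  exact fgwE_le_two_rpow_mul hα hp π

theorem stmt6 {Z Ω : Type*} [MetricSpace Z] [MetricSpace Ω]
    [CompactSpace Z]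
    [MeasurableSpace Z] [BorelSpace Z] [MeasurableSpace Ω] [BorelSpace Ω]
    (μ ν : Measure (Z × Ω)) [IsProbabilityMeasure μ] [IsProbabilityMeasure ν]
    (α p : ℝ) (hα : α ∈ Set.Icc (0 : ℝ) 1) (hp : 1 ≤ p) :
    (FGW α p 1 μ ν) ^ p ≤ (2 : ℝ≥0∞) ^ p *
      ⨅ π ∈ Couplings μ ν,
        ∫⁻ w, ENNReal.ofReal
          (((1 - α) * dist w.1.2 w.2.2 + α * dist w.1.1 w.2.1) ^ p) ∂π :=
  stmt6_general μ ν α p hα hp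

end
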